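/- arXiv:2001.03797 — 3 statements merged into one kernel-verified Lean document; each statement's English description precedes it below -/
import Mathlib

section
/- Let G be a finite group with g_k(G) ≥ N and k ≥ 2. Suppose there is a short exact sequence 1 → C → G → G' → 1 where C is cyclic. Then g_{k-1}(G') ≥ N. -/
/-- The rank of a group: the minimal cardinality of a (finite) generating set.
By convention (following the paper) it is at least 1. -/
noncomputable def grpRank (G : Type*) [Group G] : ℕ :=
  max 1 (sInf {n | ∃ S : Finset G, S.card = n ∧ Subgroup.closure (S : Set G) = ⊤})

/-- `rN G N` is the minimum rank among subgroups of `G` of index at most `N`. -/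
noncomputable def rN (G : Type*) [Group G] (N : ℕ) : ℕ :=
  sInf {r | ∃ H : Subgroup G, H.index ≤ N ∧ grpRank H = r}

/-- `gGe G k N` expresses the inequality `g_k(G) ≥ N` for the k-generation order:
`|G| ≥ N` and every subgroup of index at most `N` has rank at least `k`. -/
def gGe (G : Type*) [Group G] (k N : ℕ) : Prop :=
  N ≤ Nat.card G ∧ k ≤ rN G N

/-!
A subgroup `H` of `G ⧸ C` pulls back to a subgroup of `G` of the same index, which is an
extension of `H` by the cyclic group `C`: lifting a generating set of `H` and adding a generator
of `C` generates it, so it needs at most one generator more than `H`. Besides, `C` itself has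
rank `1 < k`, so its index `|G ⧸ C|` is not below `N`.
-/

open Group Function

theorem Group.rank_le_one_of_isCyclic {G : Type*} [Group G] [FG G] [IsCyclic G] :
    rank G ≤ 1 := by
  obtain ⟨g, hg⟩ := (isCyclic_iff_exists_zpowers_eq_top (α := G)).1 ‹_›
  refine (rank_le (S := {g}) ?_).trans_eq (Finset.card_singleton g)
  rwa [Finset.coe_singleton, ← Subgroup.zpowers_eq_closure]

theorem Group.rank_le_rank_ker_add_rank {G H : Type*} [Group G] [Group H] [FG G] [FG H]
    (f : G →* H) (hf : Surjective f) [FG f.ker] : rank G ≤ rank f.ker + rank H := by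
  classical
  obtain ⟨S, hS, hS_top⟩ := rank_spec f.ker
  obtain ⟨T, hT, hT_top⟩ := rank_spec H
  set U := S.map (Embedding.subtype _) ∪ T.image (surjInv hf)
  have hker : f.ker ≤ .closure (U : Set G) := by
    rw [← f.ker.range_subtype, MonoidHom.range_eq_map, ← hS_top, MonoidHom.map_closure]
    refine Subgroup.closure_mono ?_
    rintro _ ⟨s, hs, rfl⟩
    exact Finset.mem_union_left _ (Finset.mem_map_of_mem _ hs)
  have hmap : (Subgroup.closure (U : Set G)).map f = ⊤ := by
    rw [MonoidHom.map_closure, eq_top_iff, ← hT_top]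
    refine Subgroup.closure_mono fun t ht => ⟨surjInv hf t, ?_, surjInv_eq hf t⟩
    exact Finset.mem_union_right _ (Finset.mem_image_of_mem _ ht)
  have hU : Subgroup.closure (U : Set G) = ⊤ := by
    rw [← sup_eq_left.2 hker, ← Subgroup.comap_map_eq, hmap, Subgroup.comap_top]
  calc rank G ≤ U.card := rank_le hU
    _ ≤ S.card + T.card := (Finset.card_union_le _ _).trans (by
        grw [Finset.card_map, Finset.card_image_le])
    _ = rank f.ker + rank H := by rw [hS, hT]

theorem grpRank_eq_max_one_rank (G : Type*) [Group G] [FG G] : grpRank G = max 1 (rank G) := by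
  refine congrArg (max 1) (le_antisymm (Nat.sInf_le (rank_spec G)) ?_)
  refine le_csInf ⟨_, rank_spec G⟩ ?_
  rintro _ ⟨S, rfl, hS⟩
  exact rank_le hS

theorem grpRank_le_one_of_isCyclic (G : Type*) [Group G] [FG G] [IsCyclic G] : grpRank G ≤ 1 := by
  rw [grpRank_eq_max_one_rank]
  exact max_le le_rfl rank_le_one_of_isCyclic

theorem grpRank_le_add_one_of_isCyclic_ker {G H : Type*} [Group G] [Group H] [FG G] [FG H]
    (f : G →* H) (hf : Surjective f) [FG f.ker] [IsCyclic f.ker] :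
    grpRank G ≤ grpRank H + 1 := by
  have hG := rank_le_rank_ker_add_rank f hf
  have hker : rank f.ker ≤ 1 := rank_le_one_of_isCyclic
  simp only [grpRank_eq_max_one_rank]
  omega

theorem grpRank_comap_mk_le {G : Type*} [Group G] [Finite G] (C : Subgroup G) [C.Normal]
    [IsCyclic C] (H : Subgroup (G ⧸ C)) :
    grpRank (H.comap (QuotientGroup.mk' C)) ≤ grpRank H + 1 := by
  let f := (QuotientGroup.mk' C).subgroupComap H
  have hker : f.ker = C.subgroupOf (H.comap (QuotientGroup.mk' C)) := by
    ext x
    rw [MonoidHom.mem_ker, Subgroup.mem_subgroupOf, ← QuotientGroup.eq_one_iff]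
    exact Subtype.ext_iff
  have hC : C ≤ H.comap (QuotientGroup.mk' C) :=
    (QuotientGroup.ker_mk' C).symm.trans_le (MonoidHom.ker_le_comap _ H)
  have : IsCyclic f.ker := by
    rw [hker]
    exact (Subgroup.subgroupOfEquivOfLe hC).isCyclic.2 ‹_›
  exact grpRank_le_add_one_of_isCyclic_ker f <|
    (QuotientGroup.mk' C).subgroupComap_surjective_of_surjective H (QuotientGroup.mk'_surjective C)

theorem le_rN_iff {G : Type*} [Group G] {k N : ℕ} (hk : k ≠ 0) :
    k ≤ rN G N ↔
      (∃ H : Subgroup G, H.index ≤ N) ∧ ∀ H : Subgroup G, H.index ≤ N → k ≤ grpRank H := by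
  rcases Set.eq_empty_or_nonempty {r | ∃ H : Subgroup G, H.index ≤ N ∧ grpRank H = r}
    with h | h
  · rw [rN, h, Nat.sInf_empty]
    refine iff_of_false (by omega) fun ⟨⟨H, hH⟩, _⟩ => h.subset ⟨H, hH, rfl⟩
  · rw [rN, le_csInf_iff (OrderBot.bddBelow _) h]
    simp only [Set.mem_ofPred_eq, forall_exists_index, and_imp, forall_apply_eq_imp_iff₂]
    obtain ⟨_, H, hH, -⟩ := h
    exact ⟨fun hle => ⟨⟨H, hH⟩, hle⟩, And.right⟩

/-- If `g_k(G) ≥ N` with `k ≥ 2` and `C ⊴ G` is cyclic, then `g_{k-1}(G/C) ≥ N`. -/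
theorem k_generation_under_cyclic_quotient (G : Type*) [Group G] [Finite G] (k N : ℕ)
    (hk : 2 ≤ k) (C : Subgroup G) [C.Normal] (hcyc : IsCyclic C)
    (hG : gGe G k N) :
    gGe (G ⧸ C) (k - 1) N := by
  obtain ⟨-, hrN⟩ := hG
  obtain ⟨⟨H₀, hH₀⟩, hrank⟩ := (le_rN_iff (by omega)).1 hrN
  have hN : N ≤ Nat.card (G ⧸ C) := by
    by_contra! hlt
    have hkC := hrank C (Subgroup.index_eq_card C ▸ hlt.le)
    have hC := grpRank_le_one_of_isCyclic C
    omega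
  refine ⟨hN, (le_rN_iff (by omega)).2 ⟨⟨⊤, ?_⟩, fun H hH => ?_⟩⟩
  · have hH₀_pos := H₀.index_ne_zero_of_finite
    rw [Subgroup.index_top]
    omega
  · have hk_comap :=
      hrank _ ((H.index_comap_of_surjective (QuotientGroup.mk'_surjective C)).trans_le hH)
    have h_comap := grpRank_comap_mk_le C H
    omega
end

section
/- Let 1 → T → E → Q → 1 be a group extension where T is abelian and every element of Q has order dividing h. Let G ≤ E be a finite subgroup containing an abelian normal subgroup A_0 of index at most J. Set l = h·J (or any common multiple of h and all indices involved, e.g., l = h!·J). Then the subgroup G^l generated by l-th powers of elements of G is contained in T ∩ G, is abelian, is characteristic in G, and has index at most l^r·J in G, where r is the rank of A_0. -/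
/-!
Every `l`-th power of `G` lies in `T`, because `Q` has exponent dividing `l`, and in `A₀`,
because `G ⧸ A₀` has order dividing `l`; hence `G^l ≤ A₀ ∩ T`. The quotient `A₀ ⧸ G^l` is
an abelian group of exponent dividing `l` generated by `r` elements, so its order divides
`l ^ r`, and `[G : G^l] = [A₀ : G^l] · [G : A₀] ≤ l ^ r · J`.
-/

/-- The subgroup of `G` generated by all `l`-th powers of elements of `G`. -/
def powSubgroup (G : Type*) [Group G] (l : ℕ) : Subgroup G :=
  Subgroup.closure {x : G | ∃ g : G, g ^ l = x}

section PowSubgroup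

variable {G : Type*} [Group G] {l : ℕ}

theorem powSubgroup_le_iff {K : Subgroup G} : powSubgroup G l ≤ K ↔ ∀ g : G, g ^ l ∈ K := by
  simp only [powSubgroup, Subgroup.closure_le, Set.ofPred_subset, forall_exists_index,
    forall_apply_eq_imp_iff, SetLike.mem_coe]

theorem pow_mem_powSubgroup (g : G) : g ^ l ∈ powSubgroup G l :=
  Subgroup.subset_closure ⟨g, rfl⟩

theorem powSubgroup_characteristic : (powSubgroup G l).Characteristic :=
  Subgroup.characteristic_iff_le_comap.mpr fun φ =>
    powSubgroup_le_iff.mpr fun g => by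
      rw [Subgroup.mem_comap, map_pow]
      exact pow_mem_powSubgroup (φ g)

end PowSubgroup

theorem Subgroup.pow_mem_of_index_dvd {G : Type*} [Group G] (H : Subgroup G) [H.Normal]
    {l : ℕ} (hl : H.index ∣ l) (g : G) : g ^ l ∈ H := by
  obtain ⟨c, rfl⟩ := hl
  rw [pow_mul]
  exact H.pow_mem (H.pow_index_mem g) c

theorem QuotientGroup.pow_mem_of_forall_pow_eq_one {E : Type*} [Group E] {T : Subgroup E}
    [T.Normal] {h l : ℕ} (hQ : ∀ q : E ⧸ T, q ^ h = 1) (hl : h ∣ l) (g : E) : g ^ l ∈ T := by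
  obtain ⟨c, rfl⟩ := hl
  rw [← QuotientGroup.eq_one_iff, QuotientGroup.mk_pow, pow_mul, hQ, one_pow]

theorem Subgroup.index_dvd_pow_rank_of_pow_mem {A : Type*} [CommGroup A] [Group.FG A]
    {K : Subgroup A} {l : ℕ} (hK : ∀ a : A, a ^ l ∈ K) : K.index ∣ l ^ Group.rank A := by
  have hexp : ∀ q : A ⧸ K, q ^ l = 1 := fun q =>
    QuotientGroup.induction_on q fun a => by
      rw [← QuotientGroup.mk_pow, QuotientGroup.eq_one_iff]
      exact hK a
  exact (card_dvd_exponent_pow_rank' (A ⧸ K) hexp).trans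
    (pow_dvd_pow l (Group.rank_le_of_surjective _ (QuotientGroup.mk'_surjective K)))

theorem power_subgroup_in_extension_general (E : Type*) [Group E] (T : Subgroup E) [T.Normal]
    (h J r l : ℕ) (hQ : ∀ q : E ⧸ T, q ^ h = 1)
    (G : Subgroup E) [Finite G]
    (A0 : Subgroup G) [A0.Normal]
    (hA0comm : ∀ x y : A0, x * y = y * x)
    (hA0rank : ∃ S : Finset G, S.card = r ∧ Subgroup.closure (S : Set (G : Type _)) = A0)
    (hJ : A0.index ≤ J)
    (hl0 : 0 < l) (hlh : h ∣ l) (hlA : A0.index ∣ l) :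
    (∀ x : G, x ∈ powSubgroup G l → (x : E) ∈ T) ∧
    powSubgroup G l ≤ A0 ∧
    (∀ x y : powSubgroup G l, x * y = y * x) ∧
    (powSubgroup G l).Characteristic ∧
    (powSubgroup G l).index ≤ l ^ r * J := by
  have hT_le : powSubgroup G l ≤ T.subgroupOf G := powSubgroup_le_iff.mpr fun g =>
    Subgroup.mem_subgroupOf.mpr (QuotientGroup.pow_mem_of_forall_pow_eq_one hQ hlh g)
  have hA0_le : powSubgroup G l ≤ A0 := powSubgroup_le_iff.mpr (A0.pow_mem_of_index_dvd hlA)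
  let _ : CommGroup A0 := { A0.toGroup with mul_comm := hA0comm }
  have hrank : Group.rank A0 ≤ r := by
    obtain ⟨S, rfl, hS⟩ := hA0rank
    exact (Subgroup.rank_congr hS.symm).trans_le (Subgroup.rank_closure_finset_le_card S)
  have hrelIndex : (powSubgroup G l).relIndex A0 ∣ l ^ Group.rank A0 :=
    Subgroup.index_dvd_pow_rank_of_pow_mem fun a => pow_mem_powSubgroup (a : G)
  refine ⟨fun x hx => hT_le hx, hA0_le, fun x y => ?_, powSubgroup_characteristic, ?_⟩
  · have hxy := congrArg Subtype.val (hA0comm ⟨x, hA0_le x.2⟩ ⟨y, hA0_le y.2⟩)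
    exact Subtype.ext hxy
  · calc (powSubgroup G l).index
        = (powSubgroup G l).relIndex A0 * A0.index := (Subgroup.relIndex_mul_index hA0_le).symm
      _ ≤ l ^ Group.rank A0 * J := Nat.mul_le_mul (Nat.le_of_dvd (pow_pos hl0 _) hrelIndex) hJ
      _ ≤ l ^ r * J := Nat.mul_le_mul_right J (Nat.pow_le_pow_right hl0 hrank)

/-- Let `1 → T → E → Q → 1` be a group extension with `T` abelian and `Q` of exponent
dividing `h`. Let `G ≤ E` be finite with an abelian normal subgroup `A₀` of rank `r` and
index at most `J`, and let `l` be a common multiple of `h` and the index of `A₀` (e.g.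
`l = h!·J`). Then `G^l` is contained in `T`, contained in `A₀` (hence abelian), is
characteristic in `G`, and has index at most `l^r · J` in `G`. -/
theorem power_subgroup_in_extension (E : Type*) [Group E] (T : Subgroup E) [T.Normal]
    (hT : ∀ x y : T, x * y = y * x)
    (h J r l : ℕ) (hQ : ∀ q : E ⧸ T, q ^ h = 1)
    (G : Subgroup E) [Finite G]
    (A0 : Subgroup G) [A0.Normal]
    (hA0comm : ∀ x y : A0, x * y = y * x)
    (hA0rank : ∃ S : Finset G, S.card = r ∧ Subgroup.closure (S : Set (G : Type _)) = A0)
    (hJ : A0.index ≤ J)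
    (hl0 : 0 < l) (hlh : h ∣ l) (hlA : A0.index ∣ l) :
    (∀ x : G, x ∈ powSubgroup G l → (x : E) ∈ T) ∧
    powSubgroup G l ≤ A0 ∧
    (∀ x y : powSubgroup G l, x * y = y * x) ∧
    (powSubgroup G l).Characteristic ∧
    (powSubgroup G l).index ≤ l ^ r * J :=
  power_subgroup_in_extension_general E T h J r l hQ G A0 hA0comm hA0rank hJ hl0 hlh hlA
end

section
/- Let Λ ⊆ [0,1] ∩ Q be a set satisfying the descending chain condition. Then the set H(Λ) = {1 - (1-λ)/m : λ ∈ Λ, m ∈ Z_{>0}} ∪ Λ also satisfies the descending chain condition, and its accumulation points are contained in {1 - (1-λ')/m : λ' an accumulation point of Λ ∪ {1}, m ∈ Z_{>0}} ∪ {1}; in particular if Λ has rational accumulation points then so does H(Λ). -/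
/-- A set of rationals satisfies the descending chain condition if it contains no
strictly decreasing infinite sequence. -/
def DCCSet (S : Set ℚ) : Prop := ∀ f : ℕ → ℚ, (∀ n, f n ∈ S) → ¬ StrictAnti f

/-- `x` is an accumulation point of the set `S ⊆ ℝ`. -/
def IsAccumPt (S : Set ℝ) (x : ℝ) : Prop :=
  ∀ ε : ℝ, 0 < ε → ∃ y ∈ S, y ≠ x ∧ |y - x| < ε

/-!
Writing `H(Λ)` as the image of `Λ × ℤ_{>0}` under `(l, m) ↦ 1 - (1 - l)/m`, which is monotone
in both arguments when `l ≤ 1`, the DCC is inherited from the partial well-order on the product.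
For the accumulation points: a point `y = 1 - (1 - l)/m` of `H(Λ)` with `l ∈ [0, 1]` satisfies
`|y - 1| ≤ 1/m`, so near any `x ≠ 1` only finitely many `m` occur, one of them infinitely often,
and the affine inverse `y ↦ 1 - m(1 - y)` carries the corresponding points of `H(Λ)` back to
points of `Λ` accumulating at `1 - m(1 - x)`.
-/

open Set Filter Topology

theorem dccSet_iff_isWF {S : Set ℚ} : DCCSet S ↔ S.IsWF := by
  rw [isWF_iff_no_descending_seq]
  exact ⟨fun h f hf hS => h f hS hf, fun h f hS hf => h f hf hS⟩

theorem isAccumPt_iff_accPt {S : Set ℝ} {x : ℝ} : IsAccumPt S x ↔ AccPt x (𝓟 S) := by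
  simp only [accPt_iff_nhds, Metric.mem_nhds_iff, IsAccumPt]
  constructor
  · rintro h U ⟨ε, hε, hU⟩
    obtain ⟨y, hyS, hyx, hy⟩ := h ε hε
    exact ⟨y, ⟨hU (by rwa [Metric.mem_ball, Real.dist_eq]), hyS⟩, hyx⟩
  · intro h ε hε
    obtain ⟨y, ⟨hy, hyS⟩, hyx⟩ := h _ ⟨ε, hε, subset_rfl⟩
    exact ⟨y, hyS, hyx, by rwa [Metric.mem_ball, Real.dist_eq] at hy⟩

section Field

variable {K : Type*} [Field K]

def hyperCoeff (l : K) (m : ℕ) : K := 1 - (1 - l) / m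

/-- `H(Λ)`; the term `m = 1` is `Λ` itself. -/
def hyperstandardSet (Λ : Set K) : Set K := Function.uncurry hyperCoeff '' Λ ×ˢ Ioi 0

theorem hyperCoeff_one (l : K) : hyperCoeff l 1 = l := by simp [hyperCoeff]

theorem map_hyperCoeff {L : Type*} [Field L] (f : K →+* L) (l : K) (m : ℕ) :
    f (hyperCoeff l m) = hyperCoeff (f l) m := by
  simp [hyperCoeff]

theorem image_hyperstandardSet {L : Type*} [Field L] (f : K →+* L) (Λ : Set K) :
    f '' hyperstandardSet Λ = hyperstandardSet (f '' Λ) := by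
  ext y
  simp [hyperstandardSet, map_hyperCoeff]

theorem setOf_union_eq_hyperstandardSet (Λ : Set K) :
    {x : K | ∃ l ∈ Λ, ∃ m : ℕ, 0 < m ∧ x = 1 - (1 - l) / (m : K)} ∪ Λ = hyperstandardSet Λ := by
  ext x
  simp only [hyperstandardSet, mem_union, mem_ofPred_eq, mem_image, Prod.exists, mem_prod, mem_Ioi,
    Function.uncurry_apply_pair]
  constructor
  · rintro (⟨l, hl, m, hm, rfl⟩ | hx)
    · exact ⟨l, m, ⟨hl, hm⟩, rfl⟩
    · exact ⟨x, 1, ⟨hx, one_pos⟩, hyperCoeff_one x⟩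
  · rintro ⟨l, m, ⟨hl, hm⟩, rfl⟩
    exact Or.inl ⟨l, hl, m, hm, rfl⟩

end Field

section Ordered

variable {K : Type*} [Field K] [LinearOrder K] [IsStrictOrderedRing K]

theorem hyperCoeff_le_hyperCoeff {l l' : K} {m m' : ℕ} (hl : l ≤ l') (hl' : l' ≤ 1) (hm : 0 < m)
    (hm' : m ≤ m') : hyperCoeff l m ≤ hyperCoeff l' m' := by
  unfold hyperCoeff
  have : (0 : K) < m := by exact_mod_cast hm
  have : (m : K) ≤ m' := by exact_mod_cast hm'
  gcongr
  linarith

theorem abs_hyperCoeff_sub_one_le {l : K} (hl : l ∈ Icc 0 1) {m : ℕ} (hm : 0 < m) :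
    |hyperCoeff l m - 1| ≤ 1 / m := by
  have : (0 : K) < m := by exact_mod_cast hm
  rw [hyperCoeff, sub_sub_cancel_left, abs_neg, abs_div, Nat.abs_cast,
    abs_of_nonneg (sub_nonneg.2 hl.2)]
  gcongr
  linarith [hl.1]

theorem isWF_hyperstandardSet {Λ : Set K} (hΛ : Λ.IsWF) (hΛ1 : ∀ l ∈ Λ, l ≤ 1) :
    (hyperstandardSet Λ).IsWF := by
  refine (IsPWO.image_of_monotoneOn (hΛ.isPWO.prod (IsWF.of_wellFoundedLT _).isPWO) ?_).isWF
  rintro ⟨l, m⟩ ⟨-, hm⟩ ⟨l', m'⟩ ⟨hl', -⟩ ⟨hll', hmm'⟩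
  exact hyperCoeff_le_hyperCoeff hll' (hΛ1 l' hl') hm hmm'

end Ordered

theorem accPt_of_accPt_image_hyperCoeff {Λ : Set ℝ} {x : ℝ} {m : ℕ} (hm : 0 < m)
    (hx : AccPt x (𝓟 ((hyperCoeff · m) '' Λ))) : AccPt (1 - m * (1 - x)) (𝓟 Λ) := by
  have hm0 : (m : ℝ) ≠ 0 := by positivity
  have hinv : (fun y : ℝ => 1 - m * (1 - y)) ∘ (hyperCoeff · m) = id := by
    funext l; simp only [Function.comp_apply, hyperCoeff, id]; field_simp; ring
  have hinj : Function.Injective fun y : ℝ => 1 - m * (1 - y) := by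
    intro a b h; simpa [hm0] using h
  have := hx.map (by fun_prop : Continuous fun y : ℝ => 1 - m * (1 - y)).continuousAt hinj
  rwa [map_principal, ← image_comp, hinv, image_id] at this

theorem exists_accPt_image_hyperCoeff {Λ : Set ℝ} (hΛ : Λ ⊆ Icc 0 1) {x : ℝ} (hx1 : x ≠ 1)
    (hx : AccPt x (𝓟 (hyperstandardSet Λ))) :
    ∃ m, 0 < m ∧ AccPt x (𝓟 ((hyperCoeff · m) '' Λ)) := by
  obtain ⟨M, hM⟩ := exists_nat_gt (1 / |x - 1|)
  have hM0 : (0 : ℝ) < M := lt_trans (by positivity) hM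
  have hfar : ∀ᶠ y in 𝓝 x, 1 / (M : ℝ) < |y - 1| :=
    ((continuous_sub_right 1).abs.tendsto x).eventually_const_lt
      (by rwa [div_lt_iff₀ hM0, mul_comm, ← div_lt_iff₀ (abs_pos.2 (sub_ne_zero.2 hx1))])
  have : ∃ᶠ y in 𝓝 x, ∃ m ∈ Finset.Ioo 0 M, y ≠ x ∧ y ∈ (hyperCoeff · m) '' Λ := by
    refine ((accPt_iff_frequently.1 hx).and_eventually hfar).mono ?_
    rintro y ⟨⟨hyx, ⟨l, m⟩, ⟨hl, hm⟩, rfl⟩, hfar⟩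
    refine ⟨m, Finset.mem_Ioo.2 ⟨hm, ?_⟩, hyx, l, hl, rfl⟩
    have := hfar.trans_le (abs_hyperCoeff_sub_one_le (hΛ hl) hm)
    exact_mod_cast (one_div_lt_one_div hM0 (by exact_mod_cast hm)).1 this
  obtain ⟨m, hm, hfreq⟩ := (Finset.frequently_exists _).1 this
  exact ⟨m, (Finset.mem_Ioo.1 hm).1, accPt_iff_frequently.2 hfreq⟩

theorem exists_accPt_of_accPt_hyperstandardSet {Λ : Set ℝ} (hΛ : Λ ⊆ Icc 0 1) {x : ℝ}
    (hx1 : x ≠ 1) (hx : AccPt x (𝓟 (hyperstandardSet Λ))) :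
    ∃ l', AccPt l' (𝓟 Λ) ∧ ∃ m, 0 < m ∧ x = hyperCoeff l' m := by
  obtain ⟨m, hm, hxm⟩ := exists_accPt_image_hyperCoeff hΛ hx1 hx
  refine ⟨_, accPt_of_accPt_image_hyperCoeff hm hxm, m, hm, ?_⟩
  have : (m : ℝ) ≠ 0 := by positivity
  simp only [hyperCoeff]
  field_simp
  ring

/-- If `Λ ⊆ [0,1] ∩ ℚ` satisfies DCC, then the hyperstandard set
`H(Λ) = {1 - (1-λ)/m : λ ∈ Λ, m ∈ ℤ_{>0}} ∪ Λ` satisfies DCC, its accumulation points are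
contained in `{1 - (1-λ')/m : λ' an accumulation point of Λ ∪ {1}, m > 0} ∪ {1}`, and in
particular if `Λ` has rational accumulation points then so does `H(Λ)`. -/
theorem hyperstandard_dcc (Λ : Set ℚ) (hsub : Λ ⊆ Set.Icc 0 1) (hdcc : DCCSet Λ) :
    DCCSet ({x : ℚ | ∃ l ∈ Λ, ∃ m : ℕ, 0 < m ∧ x = 1 - (1 - l) / (m : ℚ)} ∪ Λ) ∧
    (∀ x : ℝ, IsAccumPt
        ((fun q : ℚ => (q : ℝ)) ''
          ({x : ℚ | ∃ l ∈ Λ, ∃ m : ℕ, 0 < m ∧ x = 1 - (1 - l) / (m : ℚ)} ∪ Λ)) x →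
      x = 1 ∨ ∃ l' : ℝ, IsAccumPt ((fun q : ℚ => (q : ℝ)) '' (Λ ∪ {1})) l' ∧
        ∃ m : ℕ, 0 < m ∧ x = 1 - (1 - l') / (m : ℝ)) ∧
    ((∀ x : ℝ, IsAccumPt ((fun q : ℚ => (q : ℝ)) '' Λ) x → ∃ q : ℚ, x = (q : ℝ)) →
      ∀ x : ℝ, IsAccumPt
          ((fun q : ℚ => (q : ℝ)) ''
            ({x : ℚ | ∃ l ∈ Λ, ∃ m : ℕ, 0 < m ∧ x = 1 - (1 - l) / (m : ℚ)} ∪ Λ)) x →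
        ∃ q : ℚ, x = (q : ℝ)) := by
  rw [setOf_union_eq_hyperstandardSet]
  have hcast : (fun q : ℚ => (q : ℝ)) '' hyperstandardSet Λ =
      hyperstandardSet ((fun q : ℚ => (q : ℝ)) '' Λ) := image_hyperstandardSet (Rat.castHom ℝ) Λ
  have hΛℝ : (fun q : ℚ => (q : ℝ)) '' Λ ⊆ Icc 0 1 := by
    rintro _ ⟨q, hq, rfl⟩
    exact ⟨Rat.cast_nonneg.2 (hsub hq).1, Rat.cast_le.2 (hsub hq).2 |>.trans_eq Rat.cast_one⟩
  have hacc (x : ℝ) (hx : IsAccumPt ((fun q : ℚ => (q : ℝ)) '' hyperstandardSet Λ) x) :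
      x = 1 ∨ ∃ l', AccPt l' (𝓟 ((fun q : ℚ => (q : ℝ)) '' Λ)) ∧ ∃ m, 0 < m ∧ x = hyperCoeff l' m :=
    or_iff_not_imp_left.2 fun hx1 => exists_accPt_of_accPt_hyperstandardSet hΛℝ hx1
      (by rwa [isAccumPt_iff_accPt, hcast] at hx)
  have hwf := isWF_hyperstandardSet (dccSet_iff_isWF.1 hdcc) fun _ hl => (hsub hl).2
  refine ⟨dccSet_iff_isWF.2 hwf, fun x hx => (hacc x hx).imp_right ?_, fun hrat x hx => ?_⟩
  · rintro ⟨l', hl', m, hm, rfl⟩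
    exact ⟨l', isAccumPt_iff_accPt.2 (hl'.mono (principal_mono.2 (image_mono subset_union_left))),
      m, hm, rfl⟩
  · rcases hacc x hx with rfl | ⟨l', hl', m, -, rfl⟩
    · exact ⟨1, Rat.cast_one.symm⟩
    · obtain ⟨q, rfl⟩ := hrat l' (isAccumPt_iff_accPt.2 hl')
      exact ⟨hyperCoeff q m, (map_hyperCoeff (Rat.castHom ℝ) q m).symm⟩
end
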